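/- arXiv:2303.03133 — 2 statements merged into one kernel-verified Lean document; each statement's English description precedes it below -/
import Mathlib

section
/- The function x : [0,T) → ℝ² given by x(t) = M(T−t)·M(T−t₀)⁻¹·x₀ with M(τ) = [[τ sin(ln τ), τ cos(ln τ)], [−cos(ln τ), sin(ln τ)]] satisfies ẋ(t) = A(T−t)·x(t) for all t ∈ [t₀, T), where A(τ) = [[−1/τ, 1], [−1/τ², 0]], and for x₀ ≠ 0 the limit lim_{t→T} x(t) does not exist. -/
open Matrix Real Set Filter Topology

noncomputable def M (τ : ℝ) : Matrix (Fin 2) (Fin 2) ℝ :=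
  !![τ * Real.sin (Real.log τ), τ * Real.cos (Real.log τ);
     -Real.cos (Real.log τ), Real.sin (Real.log τ)]

noncomputable def A (τ : ℝ) : Matrix (Fin 2) (Fin 2) ℝ :=
  !![-1/τ, 1; -1/τ^2, 0]

/-!
Differentiating entrywise gives `M' = -A M`, so `x t = M (T - t) c` with `c = M (T - t₀)⁻¹ x₀`
solves `ẋ = A (T - t) x`. As `t → T`, write `θ = log (T - t) → -∞`: the second coordinate of `x`
is `-cos θ * c 0 + sin θ * c 1`, which is `2π`-periodic in `θ`. If it converged it would be
constant, forcing `c = 0`, i.e. `x₀ = 0`.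
-/

theorem Function.Periodic.eq_of_tendsto_atBot {α : Type*} [TopologicalSpace α] [T2Space α]
    {f : ℝ → α} {p : ℝ} (hf : Function.Periodic f p) (hp : p ≠ 0) {L : α}
    (h : Tendsto f atBot (𝓝 L)) (θ : ℝ) : f θ = L := by
  wlog hp : 0 < p generalizing p
  · exact this hf.neg (neg_ne_zero.2 ‹p ≠ 0›) (by grind)
  have hseq : Tendsto (fun n : ℕ => θ - n * p) atTop atBot :=
    tendsto_atBot_add_const_left _ θ
      (tendsto_neg_atTop_atBot.comp (tendsto_natCast_atTop_atTop.atTop_mul_const hp))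
  refine tendsto_nhds_unique tendsto_const_nhds ((h.comp hseq).congr fun n => ?_)
  exact hf.sub_nat_mul_eq n

theorem det_M (τ : ℝ) : (M τ).det = τ := by
  rw [M, det_fin_two_of]
  linear_combination τ * sin_sq_add_cos_sq (log τ)

theorem M_mulVec_apply_zero (τ : ℝ) (c : Fin 2 → ℝ) :
    (M τ *ᵥ c) 0 = τ * sin (log τ) * c 0 + τ * cos (log τ) * c 1 := by
  simp [M, mulVec, dotProduct, Fin.sum_univ_two]

theorem M_mulVec_apply_one (τ : ℝ) (c : Fin 2 → ℝ) :
    (M τ *ᵥ c) 1 = -cos (log τ) * c 0 + sin (log τ) * c 1 := by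
  simp [M, mulVec, dotProduct, Fin.sum_univ_two]

theorem hasDerivAt_M_mulVec (c : Fin 2 → ℝ) {τ : ℝ} (hτ : τ ≠ 0) :
    HasDerivAt (fun s => M s *ᵥ c) (-(A τ *ᵥ (M τ *ᵥ c))) τ := by
  have hlog := hasDerivAt_log hτ
  have hsin := (hasDerivAt_sin (log τ)).comp τ hlog
  have hcos := (hasDerivAt_cos (log τ)).comp τ hlog
  have hid := hasDerivAt_id τ
  refine hasDerivAt_pi.2 fun i => ?_
  fin_cases i
  · convert ((hid.mul hsin).mul_const (c 0)).add ((hid.mul hcos).mul_const (c 1)) using 1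
    · ext s; simp [M_mulVec_apply_zero]
    · simp [M, A, dotProduct, Fin.sum_univ_two]
      field_simp
      ring
  · convert (hcos.neg.mul_const (c 0)).add (hsin.mul_const (c 1)) using 1
    · ext s; simp [M_mulVec_apply_one]
    · simp [M, A, dotProduct, Fin.sum_univ_two]
      field_simp

theorem not_tendsto_M_mulVec_nhdsGT_zero {c : Fin 2 → ℝ} (hc : c ≠ 0) (L : Fin 2 → ℝ) :
    ¬ Tendsto (fun τ => M τ *ᵥ c) (𝓝[>] 0) (𝓝 L) := by
  intro h
  set g : ℝ → ℝ := fun θ => -cos θ * c 0 + sin θ * c 1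
  have hg : Function.Periodic g (2 * π) := fun θ => by simp [g]
  have hlim : Tendsto g atBot (𝓝 (L 1)) := by
    refine ((tendsto_pi_nhds.1 h 1).comp tendsto_exp_atBot_nhdsGT).congr fun θ => ?_
    simp [M_mulVec_apply_one, g]
  have h0 := hg.eq_of_tendsto_atBot two_pi_pos.ne' hlim 0
  have hpi := hg.eq_of_tendsto_atBot two_pi_pos.ne' hlim π
  have hpi2 := hg.eq_of_tendsto_atBot two_pi_pos.ne' hlim (π / 2)
  simp only [g, cos_zero, sin_zero, cos_pi, sin_pi, cos_pi_div_two, sin_pi_div_two] at h0 hpi hpi2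
  exact hc (funext fun i => by fin_cases i <;> simp <;> linarith)

theorem tendsto_const_sub_nhdsGT_zero (T : ℝ) :
    Tendsto (fun τ => T - τ) (𝓝[>] 0) (𝓝[<] T) := by
  refine tendsto_nhdsWithin_iff.2 ⟨?_, eventually_nhdsWithin_of_forall fun τ hτ => ?_⟩
  · simpa using ((continuous_sub_left T).tendsto 0).mono_left nhdsWithin_le_nhds
  · simpa using hτ

theorem stmt_7_general (T t₀ : ℝ) (hT : t₀ < T) (x₀ : Fin 2 → ℝ)
    (x : ℝ → Fin 2 → ℝ)
    (hx : ∀ t, x t = (M (T - t) * (M (T - t₀))⁻¹) *ᵥ x₀) :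
    (∀ t ∈ Set.Ico t₀ T, ∀ i : Fin 2,
        HasDerivAt (fun s => x s i) ((A (T - t) *ᵥ x t) i) t) ∧
    (x₀ ≠ 0 → ¬ ∃ L : Fin 2 → ℝ, Tendsto x (nhdsWithin T (Set.Iio T)) (nhds L)) := by
  set c := (M (T - t₀))⁻¹ *ᵥ x₀
  have hxc : x = fun t => M (T - t) *ᵥ c := funext fun t => by rw [hx, ← mulVec_mulVec]
  subst hxc
  refine ⟨fun t ht => hasDerivAt_pi.1 ?_, fun hx₀ ⟨L, hL⟩ => ?_⟩
  · have := (hasDerivAt_M_mulVec c (sub_pos.2 ht.2).ne').scomp t ((hasDerivAt_id t).const_sub T)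
    simpa only [Function.comp_def, id, neg_one_smul, neg_neg] using this
  · have hdet : IsUnit (M (T - t₀)).det := by rw [det_M]; exact (sub_pos.2 hT).ne'.isUnit
    have hx₀c : M (T - t₀) *ᵥ c = x₀ := by
      simp only [c, mulVec_mulVec, mul_nonsing_inv _ hdet, one_mulVec]
    have hc : c ≠ 0 := fun hc0 => hx₀ (by rw [← hx₀c, hc0, mulVec_zero])
    refine not_tendsto_M_mulVec_nhdsGT_zero hc L ?_
    simpa only [Function.comp_def, sub_sub_cancel] using hL.comp (tendsto_const_sub_nhdsGT_zero T)

theorem stmt_7 (T t₀ : ℝ) (ht₀ : 0 ≤ t₀) (hT : t₀ < T) (x₀ : Fin 2 → ℝ)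
    (x : ℝ → Fin 2 → ℝ)
    (hx : ∀ t, x t = (M (T - t) * (M (T - t₀))⁻¹) *ᵥ x₀) :
    (∀ t ∈ Set.Ico t₀ T, ∀ i : Fin 2,
        HasDerivAt (fun s => x s i) ((A (T - t) *ᵥ x t) i) t) ∧
    (x₀ ≠ 0 → ¬ ∃ L : Fin 2 → ℝ, Tendsto x (nhdsWithin T (Set.Iio T)) (nhds L)) :=
  stmt_7_general T t₀ hT x₀ x hx
end

section
/- For the matrix function M(τ) = [[τ sin(ln τ), τ cos(ln τ)], [−cos(ln τ), sin(ln τ)]], the function x(t) = M(T−t)·v for any fixed nonzero v ∈ ℝ² is bounded on [0,T) but ‖x(t)‖ does not converge as t → T. -/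
open Matrix Real Set Filter Topology

theorem stmt_8 (T : ℝ) (hT : 0 < T) (v : Fin 2 → ℝ) (hv : v ≠ 0)
    (x : ℝ → Fin 2 → ℝ) (hx : ∀ t, x t = M (T - t) *ᵥ v) :
    (∃ C : ℝ, ∀ t ∈ Set.Ico (0:ℝ) T, ‖x t‖ ≤ C) ∧
    ¬ ∃ L : ℝ, Tendsto (fun t => ‖x t‖) (nhdsWithin T (Set.Iio T)) (nhds L) := by
  have hx0 : ∀ t, x t 0 = (T - t) * Real.sin (Real.log (T - t)) * v 0 +
      (T - t) * Real.cos (Real.log (T - t)) * v 1 := by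
    intro t; rw [hx]; simp [M, Matrix.mulVec, dotProduct, Fin.sum_univ_two]
  have hx1 : ∀ t, x t 1 = -(Real.cos (Real.log (T - t)) * v 0) +
      Real.sin (Real.log (T - t)) * v 1 := by
    intro t; rw [hx]; simp [M, Matrix.mulVec, dotProduct, Fin.sum_univ_two]
  set A : ℝ := |v 0| + |v 1| with hA
  have hA0 : 0 ≤ A := by positivity
  -- generic bound on component 0
  have hb0 : ∀ t, t < T → |x t 0| ≤ (T - t) * A := by
    intro t ht
    rw [hx0 t]
    have hτ : 0 ≤ T - t := by linarith
    have hs := Real.abs_sin_le_one (Real.log (T - t))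
    have hc := Real.abs_cos_le_one (Real.log (T - t))
    calc |(T - t) * Real.sin (Real.log (T - t)) * v 0 +
        (T - t) * Real.cos (Real.log (T - t)) * v 1|
        ≤ |(T - t) * Real.sin (Real.log (T - t)) * v 0| +
          |(T - t) * Real.cos (Real.log (T - t)) * v 1| := abs_add_le _ _
      _ = (T - t) * |Real.sin (Real.log (T - t))| * |v 0| +
          (T - t) * |Real.cos (Real.log (T - t))| * |v 1| := by
            rw [abs_mul, abs_mul, abs_mul, abs_mul, abs_of_nonneg hτ]
      _ ≤ (T - t) * 1 * |v 0| + (T - t) * 1 * |v 1| := by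
            gcongr <;> assumption
      _ = (T - t) * A := by ring
  have hb1 : ∀ t, |x t 1| ≤ A := by
    intro t
    rw [hx1 t]
    have hs := Real.abs_sin_le_one (Real.log (T - t))
    have hc := Real.abs_cos_le_one (Real.log (T - t))
    calc |-(Real.cos (Real.log (T - t)) * v 0) + Real.sin (Real.log (T - t)) * v 1|
        ≤ |-(Real.cos (Real.log (T - t)) * v 0)| + |Real.sin (Real.log (T - t)) * v 1| :=
          abs_add_le _ _
      _ = |Real.cos (Real.log (T - t))| * |v 0| + |Real.sin (Real.log (T - t))| * |v 1| := by
            rw [abs_neg, abs_mul, abs_mul]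
      _ ≤ 1 * |v 0| + 1 * |v 1| := by gcongr
      _ = A := by ring
  have normle : ∀ t, ‖x t‖ ≤ |x t 0| + |x t 1| := by
    intro t
    rw [pi_norm_le_iff_of_nonneg (by positivity)]
    intro i
    fin_cases i
    · simpa using le_add_of_nonneg_right (abs_nonneg _)
    · simpa using le_add_of_nonneg_left (abs_nonneg _)
  constructor
  · refine ⟨T * A + A, ?_⟩
    intro t ht
    obtain ⟨ht0, htT⟩ := ht
    have h1 := hb0 t htT
    have h2 := hb1 t
    have : (T - t) * A ≤ T * A := by nlinarith
    calc ‖x t‖ ≤ |x t 0| + |x t 1| := normle t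
      _ ≤ T * A + A := by linarith
  · rintro ⟨L, hL⟩
    -- x t 0 → 0 along 𝓝[<] T
    have h0 : Tendsto (fun t => |x t 0|) (𝓝[<] T) (𝓝 0) := by
      have hg : Tendsto (fun t : ℝ => (T - t) * A) (𝓝[<] T) (𝓝 0) := by
        have : Tendsto (fun t : ℝ => (T - t) * A) (𝓝 T) (𝓝 ((T - T) * A)) :=
          (Continuous.tendsto (by continuity) T)
        simpa using this.mono_left nhdsWithin_le_nhds
      have hev : ∀ᶠ t in 𝓝[<] T, |(|x t 0|)| ≤ (T - t) * A := by
        filter_upwards [self_mem_nhdsWithin] with t ht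
        rw [abs_abs]
        exact hb0 t ht
      exact squeeze_zero_norm' hev hg
    -- |x t 1| → L along 𝓝[<] T
    have h1 : Tendsto (fun t => |x t 1|) (𝓝[<] T) (𝓝 L) := by
      have hlow : Tendsto (fun t => ‖x t‖ - |x t 0|) (𝓝[<] T) (𝓝 L) := by
        simpa using hL.sub h0
      refine tendsto_of_tendsto_of_tendsto_of_le_of_le hlow hL ?_ ?_
      · intro t
        have := normle t
        simp only []
        linarith
      · intro t
        have : ‖x t 1‖ ≤ ‖x t‖ := norm_le_pi_norm (x t) 1
        simpa using this
    -- for every a, |f a| = L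
    have key : ∀ a : ℝ, |(-(Real.cos a * v 0) + Real.sin a * v 1)| = L := by
      intro a
      set f : ℕ → ℝ := fun n => T - Real.exp (a - 2 * π * n) with hf
      have hmono : Tendsto (fun n : ℕ => a - 2 * π * n) atTop atBot := by
        apply tendsto_atBot_add_const_left
        apply tendsto_neg_atTop_atBot.comp
        exact Tendsto.const_mul_atTop (by positivity) tendsto_natCast_atTop_atTop
      have hexp : Tendsto (fun n : ℕ => Real.exp (a - 2 * π * n)) atTop (𝓝 0) :=
        Real.tendsto_exp_atBot.comp hmono
      have htend : Tendsto f atTop (𝓝[<] T) := by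
        rw [tendsto_nhdsWithin_iff]
        constructor
        · have : Tendsto f atTop (𝓝 (T - 0)) := tendsto_const_nhds.sub hexp
          simpa using this
        · filter_upwards with n
          simp only [hf, Set.mem_Iio]
          have := Real.exp_pos (a - 2 * π * n)
          linarith
      have hcomp := h1.comp htend
      have hconst : ∀ n : ℕ, |x (f n) 1| = |(-(Real.cos a * v 0) + Real.sin a * v 1)| := by
        intro n
        rw [hx1]
        have : T - f n = Real.exp (a - 2 * π * n) := by simp [hf]
        rw [this, Real.log_exp]
        have hc : Real.cos (a - 2 * π * n) = Real.cos a := by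
          have := Real.cos_add_int_mul_two_pi a (-(n:ℤ))
          push_cast at this
          rw [← this]; ring_nf
        have hs : Real.sin (a - 2 * π * n) = Real.sin a := by
          have := Real.sin_add_int_mul_two_pi a (-(n:ℤ))
          push_cast at this
          rw [← this]; ring_nf
        rw [hc, hs]
      have : Tendsto (fun _ : ℕ => |(-(Real.cos a * v 0) + Real.sin a * v 1)|) atTop (𝓝 L) := by
        convert hcomp using 1
        funext n
        exact (hconst n).symm
      exact tendsto_nhds_unique tendsto_const_nhds this
    -- IVT: some a with value 0
    set g : ℝ → ℝ := fun a => -(Real.cos a * v 0) + Real.sin a * v 1 with hg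
    have hgc : ContinuousOn g (Set.uIcc 0 π) := by
      apply Continuous.continuousOn; fun_prop
    have hmem : (0:ℝ) ∈ Set.uIcc (g 0) (g π) := by
      simp only [hg, Real.cos_zero, Real.sin_zero, Real.cos_pi, Real.sin_pi]
      rw [Set.mem_uIcc]
      rcases le_total (v 0) 0 with h | h
      · right; constructor <;> linarith
      · left; constructor <;> linarith
    obtain ⟨a, -, ha⟩ := intermediate_value_uIcc hgc hmem
    have hL0 : L = 0 := by
      have := key a
      rw [show -(Real.cos a * v 0) + Real.sin a * v 1 = g a from rfl, ha] at this
      simpa using this.symm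
    have hv0 : v 0 = 0 := by
      have := key 0
      simp [hL0] at this
      simpa using this
    have hv1 : v 1 = 0 := by
      have := key (π / 2)
      simp [hL0] at this
      simpa using this
    apply hv
    funext i
    fin_cases i
    · exact hv0
    · exact hv1
end
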